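/- (Compact embedding of D(A) into V) Let (u_n)_{n∈ℕ} be a sequence of functions in D(A) such that sup_n (∫_{−1}^{1} u_n(x)² dx + ∫_{−1}^{1} (Au_n)(x)² dx) < ∞. Then there exist a subsequence (u_{n_k}) and a function u∈V such that ‖u_{n_k} − u‖_V → 0 as k→∞, i.e. ∫_{−1}^{1} (u_{n_k}−u)² dx + ∫_{−1}^{1} (1−x²)·(u_{n_k}′−u′)² dx → 0. -/

import Mathlib

open MeasureTheory Set Filter

noncomputable section

/-- `u` belongs to the domain `D(A)` of the degenerate operator `A u = ((1-x²)u')'` on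
`I = (-1,1)`: `u ∈ L²(I)` is locally absolutely continuous on `I` with a.e. derivative `u'`,
and `x ↦ (1-x²)u'(x)` extends to an absolutely continuous function on `[-1,1]` vanishing at
`x = ±1`, whose a.e. derivative `Au` belongs to `L²(I)`. -/
structure MemDA (u u' Au : ℝ → ℝ) : Prop where
  sq_int : IntegrableOn (fun x => u x ^ 2) (Ioo (-1:ℝ) 1)
  locAC : ∀ a b : ℝ, a ∈ Ioo (-1:ℝ) 1 → b ∈ Ioo (-1:ℝ) 1 →
      u b - u a = ∫ t in a..b, u' t
  deriv_intble : ∀ a b : ℝ, a ∈ Ioo (-1:ℝ) 1 → b ∈ Ioo (-1:ℝ) 1 →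
      IntervalIntegrable u' volume a b
  Au_intble : IntervalIntegrable Au volume (-1) 1
  Au_sq_int : IntegrableOn (fun x => Au x ^ 2) (Ioo (-1:ℝ) 1)
  flux : ∀ x ∈ Ioo (-1:ℝ) 1, (1 - x ^ 2) * u' x = ∫ t in (-1:ℝ)..x, Au t
  flux_one : (∫ t in (-1:ℝ)..(1:ℝ), Au t) = 0

/-- `u` belongs to the weighted space `V` on `I = (-1,1)`, with a.e. derivative `u'`. -/
structure MemV (u u' : ℝ → ℝ) : Prop where
  sq_int : IntegrableOn (fun x => u x ^ 2) (Ioo (-1:ℝ) 1)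
  locAC : ∀ a b : ℝ, a ∈ Ioo (-1:ℝ) 1 → b ∈ Ioo (-1:ℝ) 1 →
      u b - u a = ∫ t in a..b, u' t
  deriv_intble : ∀ a b : ℝ, a ∈ Ioo (-1:ℝ) 1 → b ∈ Ioo (-1:ℝ) 1 →
      IntervalIntegrable u' volume a b
  wsq_int : IntegrableOn (fun x => (1 - x ^ 2) * u' x ^ 2) (Ioo (-1:ℝ) 1)

/-!
For `u ∈ D(A)` the flux `(1 - x²) u'` is the primitive `∫_{-1}^x Au`, vanishing at `±1`. By
Cauchy–Schwarz the fluxes of a bounded sequence are uniformly ½-Hölder and satisfy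
`F² ≤ b (1 - x²)`, so Arzelà–Ascoli yields a pointwise convergent subsequence `F_k → F`, and
Bolzano–Weierstrass makes `u_k(0) → c` as well. The flux bound gives
`|u'| ≤ √b / √(1 - x²)`, which is integrable on `(-1, 1)`: hence `u_k` is uniformly bounded and
converges pointwise to `v = c + ∫₀ˣ F / (1 - t²)`, while `(1 - x²) (u_k' - v')² ≤ 4 b` with
`v' = F / (1 - x²)`. Dominated convergence then gives convergence in the norm of `V`.
-/

open Real Topology Interval BoundedContinuousFunction

theorem integrableOn_one_div_sqrt_one_sub_sq :
    IntegrableOn (fun t : ℝ => 1 / √(1 - t ^ 2)) (Ioo (-1) 1) :=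
  (intervalIntegral.integrableOn_deriv_of_nonneg continuous_arcsin.continuousOn
    (fun _ hx => hasDerivAt_arcsin hx.1.ne' hx.2.ne) fun _ _ => by positivity).mono_set
    Ioo_subset_Ioc_self

theorem sq_intervalIntegral_le {f : ℝ → ℝ} {a b : ℝ} (hab : a ≤ b)
    (hf : IntervalIntegrable f volume a b)
    (hf2 : IntervalIntegrable (fun x => f x ^ 2) volume a b) :
    (∫ x in a..b, f x) ^ 2 ≤ (b - a) * ∫ x in a..b, f x ^ 2 := by
  rcases hab.eq_or_lt with rfl | hlt
  · simp
  have hvol : volume (Ioc a b) = ENNReal.ofReal (b - a) := Real.volume_Ioc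
  have jensen := (even_two.convexOn_pow (𝕜 := ℝ)).map_set_average_le
    (continuous_pow 2).continuousOn isClosed_univ (by simp [hvol, hlt]) (by simp [hvol])
    (ae_of_all _ fun _ => mem_univ _) hf.1 hf2.1
  simp only [setAverage_eq, measureReal_def, hvol, smul_eq_mul,
    ENNReal.toReal_ofReal (sub_pos.2 hlt).le, ← intervalIntegral.integral_of_le hab] at jensen
  have hba : 0 < b - a := sub_pos.2 hlt
  rw [mul_pow, inv_pow, ← div_eq_inv_mul, ← div_eq_inv_mul,
    div_le_div_iff₀ (by positivity) hba] at jensen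
  exact le_of_mul_le_mul_right (by linarith) hba

theorem abs_div_one_sub_sq_le {F b x : ℝ} (hx : x ∈ Ioo (-1 : ℝ) 1)
    (hF : F ^ 2 ≤ b * (1 - x ^ 2)) : |F / (1 - x ^ 2)| ≤ √b * (1 / √(1 - x ^ 2)) := by
  have hp : 0 < 1 - x ^ 2 := by nlinarith [hx.1, hx.2]
  have hF' : |F| ≤ √b * √(1 - x ^ 2) := by
    rw [← sqrt_mul' _ hp.le]; exact abs_le_sqrt hF
  rw [abs_div, abs_of_pos hp, div_le_iff₀ hp]
  calc |F| ≤ √b * √(1 - x ^ 2) := hF'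
    _ = √b * (1 / √(1 - x ^ 2)) * (1 - x ^ 2) := by
      field_simp; rw [sq_sqrt hp.le]

theorem one_sub_sq_mul_div_sq_le {F b x : ℝ} (hx : x ∈ Ioo (-1 : ℝ) 1)
    (hF : F ^ 2 ≤ b * (1 - x ^ 2)) : (1 - x ^ 2) * (F / (1 - x ^ 2)) ^ 2 ≤ b := by
  have hp : 0 < 1 - x ^ 2 := by nlinarith [hx.1, hx.2]
  rw [div_pow, mul_div_assoc', sq (1 - x ^ 2), mul_div_mul_left _ _ hp.ne', div_le_iff₀ hp]
  exact hF

theorem integrableOn_div_one_sub_sq {F : ℝ → ℝ} {b : ℝ} (hFc : ContinuousOn F (Ioo (-1) 1))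
    (hF : ∀ x ∈ Ioo (-1 : ℝ) 1, F x ^ 2 ≤ b * (1 - x ^ 2)) :
    IntegrableOn (fun x => F x / (1 - x ^ 2)) (Ioo (-1) 1) :=
  (integrableOn_one_div_sqrt_one_sub_sq.const_mul √b).mono'
    ((hFc.div (by fun_prop) fun x hx => by nlinarith [hx.1, hx.2]).aestronglyMeasurable
      measurableSet_Ioo)
    (ae_restrict_of_forall_mem measurableSet_Ioo fun x hx => abs_div_one_sub_sq_le hx (hF x hx))

theorem continuousOn_primitive_of_integrableOn_Ioo {f : ℝ → ℝ} {a b c : ℝ}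
    (hf : IntegrableOn f (Ioo a b)) (hc : c ∈ Icc a b) :
    ContinuousOn (fun x => ∫ t in c..x, f t) (Icc a b) := by
  have hab : a ≤ b := hc.1.trans hc.2
  rw [← integrableOn_Icc_iff_integrableOn_Ioo, ← uIcc_of_le hab] at hf
  simpa [uIcc_of_le hab] using
    intervalIntegral.continuousOn_primitive_interval' hf.intervalIntegrable
      (by rwa [uIcc_of_le hab])

theorem memV_primitive {w : ℝ → ℝ} {b : ℝ} (c : ℝ) (hwc : ContinuousOn w (Ioo (-1) 1))
    (hw : IntegrableOn w (Ioo (-1) 1)) (hwb : ∀ x ∈ Ioo (-1 : ℝ) 1, (1 - x ^ 2) * w x ^ 2 ≤ b) :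
    MemV (fun x => c + ∫ t in (0 : ℝ)..x, w t) w := by
  have hii : ∀ a b : ℝ, a ∈ Ioo (-1 : ℝ) 1 → b ∈ Ioo (-1 : ℝ) 1 →
      IntervalIntegrable w volume a b := fun a b ha hb =>
    (hw.mono_set (ordConnected_Ioo.uIcc_subset ha hb)).intervalIntegrable
  have h0 : (0 : ℝ) ∈ Ioo (-1) 1 := by norm_num
  refine ⟨?_, fun a b ha hb => ?_, hii, ?_⟩
  · have hv := continuousOn_const (c := c) |>.add
      (continuousOn_primitive_of_integrableOn_Ioo hw (Ioo_subset_Icc_self h0))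
    exact ((hv.pow 2).integrableOn_compact isCompact_Icc).mono_set Ioo_subset_Icc_self
  · rw [add_sub_add_left_eq_sub, intervalIntegral.integral_interval_sub_left (hii 0 b h0 hb)
      (hii 0 a h0 ha)]
  · refine (integrableOn_const (C := b) measure_Ioo_lt_top.ne).mono' ?_
      (ae_restrict_of_forall_mem measurableSet_Ioo fun x hx => ?_)
    · exact ((continuousOn_const.sub (continuousOn_pow 2)).mul (hwc.pow 2)).aestronglyMeasurable
        measurableSet_Ioo
    · rw [norm_of_nonneg (mul_nonneg (by nlinarith [hx.1, hx.2]) (sq_nonneg _))]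
      exact hwb x hx

theorem exists_subseq_tendsto_of_equicontinuous {X : Type*} [TopologicalSpace X]
    [CompactSpace X] {f : ℕ → X → ℝ} {C : ℝ} (hf : Equicontinuous f)
    (hC : ∀ n x, |f n x| ≤ C) :
    ∃ g : X → ℝ, Continuous g ∧ ∃ φ : ℕ → ℕ, StrictMono φ ∧
      ∀ x, Tendsto (fun k => f (φ k) x) atTop (𝓝 (g x)) := by
  let F : ℕ → X →ᵇ ℝ := fun n => .mkOfCompact ⟨f n, hf.continuous n⟩
  have hF : Equicontinuous ((↑) : range F → X → ℝ) := fun x₀ U hU =>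
    (hf x₀ U hU).mono fun _ hx => by rintro ⟨_, n, rfl⟩; exact hx n
  obtain ⟨g, -, φ, hφ, hlim⟩ :=
    (BoundedContinuousFunction.arzela_ascoli (Icc (-C) C) isCompact_Icc (range F)
      (by rintro _ x ⟨n, rfl⟩; exact abs_le.1 (hC n x)) hF).tendsto_subseq
      fun n => subset_closure (mem_range_self n)
  exact ⟨g, g.continuous, φ, hφ, fun x =>
    tendsto_pi_nhds.1 (BoundedContinuousFunction.continuous_coe.tendsto g |>.comp hlim) x⟩

theorem tendsto_setIntegral_zero_of_abs_le_const {α : Type*} [MeasurableSpace α]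
    {μ : Measure α} {s : Set α} (hs : MeasurableSet s) (hμs : μ s ≠ ⊤) {f : ℕ → α → ℝ}
    {C : ℝ} (hmeas : ∀ n, AEStronglyMeasurable (f n) (μ.restrict s))
    (hC : ∀ n, ∀ x ∈ s, |f n x| ≤ C) (hlim : ∀ x ∈ s, Tendsto (fun n => f n x) atTop (𝓝 0)) :
    Tendsto (fun n => ∫ x in s, f n x ∂μ) atTop (𝓝 0) := by
  simpa using tendsto_integral_of_dominated_convergence (fun _ => C) hmeas
    (integrableOn_const hμs) (fun n => ae_restrict_of_forall_mem hs (hC n))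
    (ae_restrict_of_forall_mem hs hlim)

def fluxOf (Au : ℝ → ℝ) (x : ℝ) : ℝ := ∫ t in (-1)..x, Au t

namespace MemDA

variable {u u' Au : ℝ → ℝ} {b : ℝ}

theorem sq_fluxOf_sub_le (h : MemDA u u' Au) (hA : ∫ x in Ioo (-1 : ℝ) 1, Au x ^ 2 ≤ b)
    {x y : ℝ} (hx : x ∈ Icc (-1 : ℝ) 1) (hy : y ∈ Icc (-1 : ℝ) 1) :
    (fluxOf Au y - fluxOf Au x) ^ 2 ≤ b * |y - x| := by
  wlog hxy : x ≤ y generalizing x y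
  · rw [← neg_sub, neg_sq, abs_sub_comm]
    exact this hy hx (le_of_not_ge hxy)
  have hsub : Ioc x y ⊆ Ioc (-1) 1 := Ioc_subset_Ioc hx.1 hy.2
  have hsq : IntegrableOn (fun t => Au t ^ 2) (Ioc (-1) 1) :=
    (integrableOn_Ioc_iff_integrableOn_Ioo (by simp)).2 h.Au_sq_int
  have hint : ∫ t in x..y, Au t ^ 2 ≤ b := by
    rw [intervalIntegral.integral_of_le hxy]
    refine le_trans (setIntegral_mono_set h.Au_sq_int
      (ae_of_all _ fun _ => sq_nonneg _) ?_) hA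
    exact hsub.eventuallyLE.trans Ioo_ae_eq_Ioc.symm.le
  have hdiff : fluxOf Au y - fluxOf Au x = ∫ t in x..y, Au t :=
    intervalIntegral.integral_interval_sub_left
      (h.Au_intble.mono_set (uIcc_subset_uIcc left_mem_uIcc (Icc_subset_uIcc hy)))
      (h.Au_intble.mono_set (uIcc_subset_uIcc left_mem_uIcc (Icc_subset_uIcc hx)))
  rw [hdiff, abs_of_nonneg (sub_nonneg.2 hxy), mul_comm b]
  calc (∫ t in x..y, Au t) ^ 2 ≤ (y - x) * ∫ t in x..y, Au t ^ 2 :=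
        sq_intervalIntegral_le hxy
          (h.Au_intble.mono_set (uIcc_subset_uIcc (Icc_subset_uIcc hx) (Icc_subset_uIcc hy)))
          ((intervalIntegrable_iff_integrableOn_Ioc_of_le hxy).2 (hsq.mono_set hsub))
    _ ≤ (y - x) * b := mul_le_mul_of_nonneg_left hint (sub_nonneg.2 hxy)

theorem sq_fluxOf_le (h : MemDA u u' Au) (hA : ∫ x in Ioo (-1 : ℝ) 1, Au x ^ 2 ≤ b)
    {x : ℝ} (hx : x ∈ Icc (-1 : ℝ) 1) : fluxOf Au x ^ 2 ≤ b * (1 - x ^ 2) := by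
  have hb : 0 ≤ b := (setIntegral_nonneg measurableSet_Ioo fun _ _ => sq_nonneg _).trans hA
  have hleft := h.sq_fluxOf_sub_le hA (left_mem_Icc.2 (by norm_num)) hx
  have hright := h.sq_fluxOf_sub_le hA hx (right_mem_Icc.2 (by norm_num))
  have hflux_one : fluxOf Au 1 = 0 := h.flux_one
  rw [show fluxOf Au (-1) = 0 from intervalIntegral.integral_same, sub_zero] at hleft
  rw [hflux_one, zero_sub, neg_sq, abs_of_nonneg (sub_nonneg.2 hx.2)] at hright
  rw [abs_of_nonneg (by linarith [hx.1])] at hleft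
  -- the flux vanishes at both ends: estimate it from the nearer one
  rcases le_total x 0 with hx0 | hx0
  · nlinarith [hx.1]
  · nlinarith [hx.2]

theorem continuousOn_fluxOf (h : MemDA u u' Au) : ContinuousOn (fluxOf Au) (Icc (-1) 1) := by
  unfold fluxOf
  simpa [uIcc_of_le] using
    intervalIntegral.continuousOn_primitive_interval' h.Au_intble left_mem_uIcc

theorem deriv_eq (h : MemDA u u' Au) {x : ℝ} (hx : x ∈ Ioo (-1 : ℝ) 1) :
    u' x = fluxOf Au x / (1 - x ^ 2) :=
  eq_div_of_mul_eq (by nlinarith [hx.1, hx.2]) ((mul_comm _ _).trans (h.flux x hx))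

theorem continuousOn_deriv (h : MemDA u u' Au) : ContinuousOn u' (Ioo (-1) 1) :=
  ((h.continuousOn_fluxOf.mono Ioo_subset_Icc_self).div (by fun_prop)
    fun x hx => by nlinarith [hx.1, hx.2]).congr fun _ hx => h.deriv_eq hx

theorem integrableOn_deriv (h : MemDA u u' Au) (hA : ∫ x in Ioo (-1 : ℝ) 1, Au x ^ 2 ≤ b) :
    IntegrableOn u' (Ioo (-1) 1) :=
  (integrableOn_div_one_sub_sq (h.continuousOn_fluxOf.mono Ioo_subset_Icc_self)
    fun _ hx => h.sq_fluxOf_le hA (Ioo_subset_Icc_self hx)).congr_fun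
    (fun _ hx => (h.deriv_eq hx).symm) measurableSet_Ioo

theorem continuousOn (h : MemDA u u' Au) (hA : ∫ x in Ioo (-1 : ℝ) 1, Au x ^ 2 ≤ b) :
    ContinuousOn u (Ioo (-1) 1) := by
  have h0 : (0 : ℝ) ∈ Ioo (-1) 1 := by norm_num
  refine ((continuousOn_const (c := u 0)).add ((continuousOn_primitive_of_integrableOn_Ioo
    (h.integrableOn_deriv hA) (Ioo_subset_Icc_self h0)).mono Ioo_subset_Icc_self)).congr
    fun x hx => ?_
  show u x = u 0 + ∫ t in (0 : ℝ)..x, u' t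
  rw [← h.locAC 0 x h0 hx, add_sub_cancel]

theorem abs_sub_le (h : MemDA u u' Au) (hA : ∫ x in Ioo (-1 : ℝ) 1, Au x ^ 2 ≤ b)
    {x y : ℝ} (hx : x ∈ Ioo (-1 : ℝ) 1) (hy : y ∈ Ioo (-1 : ℝ) 1) :
    |u y - u x| ≤ √b * ∫ t in Ioo (-1 : ℝ) 1, 1 / √(1 - t ^ 2) := by
  have hu' := h.integrableOn_deriv hA
  rw [h.locAC x y hx hy, ← integral_const_mul]
  calc |∫ t in x..y, u' t| ≤ ∫ t in Ι x y, |u' t| :=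
        intervalIntegral.norm_integral_le_integral_norm_uIoc (f := u')
    _ ≤ ∫ t in Ioo (-1 : ℝ) 1, |u' t| :=
        setIntegral_mono_set hu'.abs (ae_of_all _ fun _ => abs_nonneg _)
          (uIoc_subset_uIcc.trans (ordConnected_Ioo.uIcc_subset hx hy)).eventuallyLE
    _ ≤ ∫ t in Ioo (-1 : ℝ) 1, √b * (1 / √(1 - t ^ 2)) :=
        setIntegral_mono_on hu'.abs (integrableOn_one_div_sqrt_one_sub_sq.const_mul _)
          measurableSet_Ioo fun t ht => by
            rw [h.deriv_eq ht]
            exact abs_div_one_sub_sq_le ht (h.sq_fluxOf_le hA (Ioo_subset_Icc_self ht))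

theorem abs_le (h : MemDA u u' Au) (hu : ∫ x in Ioo (-1 : ℝ) 1, u x ^ 2 ≤ b)
    (hA : ∫ x in Ioo (-1 : ℝ) 1, Au x ^ 2 ≤ b) {x : ℝ} (hx : x ∈ Ioo (-1 : ℝ) 1) :
    |u x| ≤ √b * (1 + ∫ t in Ioo (-1 : ℝ) 1, 1 / √(1 - t ^ 2)) := by
  have hb : 0 ≤ b := (setIntegral_nonneg measurableSet_Ioo fun _ _ => sq_nonneg _).trans hu
  obtain ⟨x₀, hx₀, hle⟩ := exists_le_setAverage (by simp) (by simp) h.sq_int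
  have hvol : volume.real (Ioo (-1 : ℝ) 1) = 2 := by simp [measureReal_def]; norm_num
  rw [setAverage_eq, hvol, smul_eq_mul] at hle
  have hx₀b : |u x₀| ≤ √b := abs_le_sqrt (by linarith)
  calc |u x| ≤ |u x₀| + |u x - u x₀| := by
        simpa using abs_add_le (u x₀) (u x - u x₀)
    _ ≤ √b + √b * ∫ t in Ioo (-1 : ℝ) 1, 1 / √(1 - t ^ 2) :=
        add_le_add hx₀b (h.abs_sub_le hA hx₀ hx)
    _ = _ := by ring

end MemDA

section Sequence

variable {u u' Au : ℕ → ℝ → ℝ} {b : ℝ} {F : ℝ → ℝ}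

theorem exists_subseq_tendsto_fluxOf (hmem : ∀ n, MemDA (u n) (u' n) (Au n))
    (hA : ∀ n, ∫ x in Ioo (-1 : ℝ) 1, Au n x ^ 2 ≤ b) :
    ∃ F : ℝ → ℝ, Continuous F ∧ ∃ φ : ℕ → ℕ, StrictMono φ ∧
      ∀ x ∈ Icc (-1 : ℝ) 1, Tendsto (fun k => fluxOf (Au (φ k)) x) atTop (𝓝 (F x)) := by
  let f : ℕ → Icc (-1 : ℝ) 1 → ℝ := fun n x => fluxOf (Au n) x
  have hmod : Tendsto (fun r => √(b * r)) (𝓝 0) (𝓝 0) := by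
    simpa using ((continuous_const.mul continuous_id).sqrt.tendsto (0 : ℝ))
  have hf : Equicontinuous f :=
    (Metric.uniformEquicontinuous_of_continuity_modulus _ hmod f fun x y n => by
      rw [Real.dist_eq, Subtype.dist_eq, Real.dist_eq]
      exact abs_le_sqrt ((hmem n).sq_fluxOf_sub_le (hA n) y.2 x.2)).equicontinuous
  have hC : ∀ n x, |f n x| ≤ √b := fun n x =>
    abs_le_sqrt (((hmem n).sq_fluxOf_le (hA n) x.2).trans
      (mul_le_of_le_one_right ((setIntegral_nonneg measurableSet_Ioo
        fun _ _ => sq_nonneg _).trans (hA n)) (by nlinarith)))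
  obtain ⟨g, hg, φ, hφ, hlim⟩ := exists_subseq_tendsto_of_equicontinuous hf hC
  have h₁ : (-1 : ℝ) ≤ 1 := by norm_num
  refine ⟨fun x => g (projIcc (-1) 1 h₁ x), hg.comp (continuous_projIcc (h := h₁)), φ, hφ,
    fun x hx => ?_⟩
  simpa [projIcc_of_mem h₁ hx] using hlim ⟨x, hx⟩

theorem sq_le_of_tendsto_fluxOf (hmem : ∀ n, MemDA (u n) (u' n) (Au n))
    (hA : ∀ n, ∫ x in Ioo (-1 : ℝ) 1, Au n x ^ 2 ≤ b) {x y : ℝ} (hx : x ∈ Icc (-1 : ℝ) 1)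
    (hF : Tendsto (fun n => fluxOf (Au n) x) atTop (𝓝 y)) : y ^ 2 ≤ b * (1 - x ^ 2) :=
  le_of_tendsto' (hF.pow 2) fun n => (hmem n).sq_fluxOf_le (hA n) hx

theorem tendsto_deriv_of_tendsto_fluxOf (hmem : ∀ n, MemDA (u n) (u' n) (Au n)) {x : ℝ}
    (hx : x ∈ Ioo (-1 : ℝ) 1) (hF : Tendsto (fun n => fluxOf (Au n) x) atTop (𝓝 (F x))) :
    Tendsto (fun n => u' n x) atTop (𝓝 (F x / (1 - x ^ 2))) :=
  (tendsto_congr fun n => (hmem n).deriv_eq hx).2 (hF.div_const _)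

theorem memV_of_tendsto_fluxOf (hmem : ∀ n, MemDA (u n) (u' n) (Au n))
    (hA : ∀ n, ∫ x in Ioo (-1 : ℝ) 1, Au n x ^ 2 ≤ b) (hFc : Continuous F)
    (hF : ∀ x ∈ Ioo (-1 : ℝ) 1, Tendsto (fun n => fluxOf (Au n) x) atTop (𝓝 (F x))) (c : ℝ) :
    MemV (fun x => c + ∫ t in (0 : ℝ)..x, F t / (1 - t ^ 2)) (fun x => F x / (1 - x ^ 2)) := by
  have hFb : ∀ x ∈ Ioo (-1 : ℝ) 1, F x ^ 2 ≤ b * (1 - x ^ 2) := fun x hx =>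
    sq_le_of_tendsto_fluxOf hmem hA (Ioo_subset_Icc_self hx) (hF x hx)
  exact memV_primitive c
    (hFc.continuousOn.div (by fun_prop) fun x hx => by nlinarith [hx.1, hx.2])
    (integrableOn_div_one_sub_sq hFc.continuousOn hFb)
    fun x hx => one_sub_sq_mul_div_sq_le hx (hFb x hx)

theorem tendsto_apply_of_tendsto_fluxOf (hmem : ∀ n, MemDA (u n) (u' n) (Au n))
    (hA : ∀ n, ∫ x in Ioo (-1 : ℝ) 1, Au n x ^ 2 ≤ b)
    (hF : ∀ x ∈ Ioo (-1 : ℝ) 1, Tendsto (fun n => fluxOf (Au n) x) atTop (𝓝 (F x)))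
    {c : ℝ} (hc : Tendsto (fun n => u n 0) atTop (𝓝 c)) {x : ℝ} (hx : x ∈ Ioo (-1 : ℝ) 1) :
    Tendsto (fun n => u n x) atTop (𝓝 (c + ∫ t in (0 : ℝ)..x, F t / (1 - t ^ 2))) := by
  have h0 : (0 : ℝ) ∈ Ioo (-1) 1 := by norm_num
  have hsub : [[0, x]] ⊆ Ioo (-1 : ℝ) 1 := ordConnected_Ioo.uIcc_subset h0 hx
  have hsub' : Ι 0 x ⊆ Ioo (-1 : ℝ) 1 := uIoc_subset_uIcc.trans hsub
  have hint : Tendsto (fun n => ∫ t in (0 : ℝ)..x, u' n t) atTop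
      (𝓝 (∫ t in (0 : ℝ)..x, F t / (1 - t ^ 2))) :=
    intervalIntegral.tendsto_integral_filter_of_dominated_convergence
      (fun t => √b * (1 / √(1 - t ^ 2)))
      (.of_forall fun n => ((hmem n).continuousOn_deriv.mono hsub').aestronglyMeasurable
        measurableSet_uIoc)
      (.of_forall fun n => ae_of_all _ fun t ht => by
        rw [(hmem n).deriv_eq (hsub' ht)]
        exact abs_div_one_sub_sq_le (hsub' ht)
          ((hmem n).sq_fluxOf_le (hA n) (Ioo_subset_Icc_self (hsub' ht))))
      (IntegrableOn.mono_set (integrableOn_one_div_sqrt_one_sub_sq.const_mul √b)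
        hsub).intervalIntegrable
      (ae_of_all _ fun t ht => tendsto_deriv_of_tendsto_fluxOf hmem (hsub' ht) (hF t (hsub' ht)))
  refine (hc.add hint).congr fun n => ?_
  rw [← (hmem n).locAC 0 x h0 hx, add_sub_cancel]

theorem tendsto_integral_sq_sub (hmem : ∀ n, MemDA (u n) (u' n) (Au n))
    (hu : ∀ n, ∫ x in Ioo (-1 : ℝ) 1, u n x ^ 2 ≤ b)
    (hA : ∀ n, ∫ x in Ioo (-1 : ℝ) 1, Au n x ^ 2 ≤ b)
    (hF : ∀ x ∈ Ioo (-1 : ℝ) 1, Tendsto (fun n => fluxOf (Au n) x) atTop (𝓝 (F x)))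
    {c : ℝ} (hc : Tendsto (fun n => u n 0) atTop (𝓝 c)) :
    Tendsto (fun n => ∫ x in Ioo (-1 : ℝ) 1,
      (u n x - (c + ∫ t in (0 : ℝ)..x, F t / (1 - t ^ 2))) ^ 2) atTop (𝓝 0) := by
  set v := fun x => c + ∫ t in (0 : ℝ)..x, F t / (1 - t ^ 2)
  set K := √b * (1 + ∫ t in Ioo (-1 : ℝ) 1, 1 / √(1 - t ^ 2))
  have hlim := fun x (hx : x ∈ Ioo (-1 : ℝ) 1) => tendsto_apply_of_tendsto_fluxOf hmem hA hF hc hx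
  have hv : ∀ x ∈ Ioo (-1 : ℝ) 1, |v x| ≤ K := fun x hx =>
    le_of_tendsto' (hlim x hx).abs fun n => (hmem n).abs_le (hu n) (hA n) hx
  have hvm : AEStronglyMeasurable v (volume.restrict (Ioo (-1) 1)) :=
    aestronglyMeasurable_of_tendsto_ae atTop
      (fun n => ((hmem n).continuousOn (hA n)).aestronglyMeasurable measurableSet_Ioo)
      (ae_restrict_of_forall_mem measurableSet_Ioo hlim)
  refine tendsto_setIntegral_zero_of_abs_le_const (C := (2 * K) ^ 2) measurableSet_Ioo
    measure_Ioo_lt_top.ne (fun n => ?_) (fun n x hx => ?_) fun x hx => ?_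
  · exact ((((hmem n).continuousOn (hA n)).aestronglyMeasurable measurableSet_Ioo).sub
      hvm).pow 2
  · have hun := abs_le.1 ((hmem n).abs_le (hu n) (hA n) hx)
    have hvx := abs_le.1 (hv x hx)
    rw [abs_of_nonneg (sq_nonneg _)]
    exact sq_le_sq' (by linarith) (by linarith)
  · simpa [v] using ((hlim x hx).sub_const (v x)).pow 2

theorem tendsto_integral_weighted_sq_sub_deriv (hmem : ∀ n, MemDA (u n) (u' n) (Au n))
    (hA : ∀ n, ∫ x in Ioo (-1 : ℝ) 1, Au n x ^ 2 ≤ b)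
    (hF : ∀ x ∈ Ioo (-1 : ℝ) 1, Tendsto (fun n => fluxOf (Au n) x) atTop (𝓝 (F x))) :
    Tendsto (fun n => ∫ x in Ioo (-1 : ℝ) 1,
      (1 - x ^ 2) * (u' n x - F x / (1 - x ^ 2)) ^ 2) atTop (𝓝 0) := by
  have hlim := fun x (hx : x ∈ Ioo (-1 : ℝ) 1) =>
    tendsto_deriv_of_tendsto_fluxOf hmem hx (hF x hx)
  have hvm : AEStronglyMeasurable (fun x => F x / (1 - x ^ 2)) (volume.restrict (Ioo (-1) 1)) :=
    aestronglyMeasurable_of_tendsto_ae atTop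
      (fun n => (hmem n).continuousOn_deriv.aestronglyMeasurable measurableSet_Ioo)
      (ae_restrict_of_forall_mem measurableSet_Ioo hlim)
  refine tendsto_setIntegral_zero_of_abs_le_const (C := 4 * b) measurableSet_Ioo
    measure_Ioo_lt_top.ne (fun n => ?_) (fun n x hx => ?_) fun x hx => ?_
  · exact (continuous_const.sub (continuous_pow 2)).aestronglyMeasurable.mul
      ((((hmem n).continuousOn_deriv.aestronglyMeasurable measurableSet_Ioo).sub hvm).pow 2)
  · have hp : 0 ≤ 1 - x ^ 2 := by nlinarith [hx.1, hx.2]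
    have hun : (1 - x ^ 2) * u' n x ^ 2 ≤ b := by
      rw [(hmem n).deriv_eq hx]
      exact one_sub_sq_mul_div_sq_le hx ((hmem n).sq_fluxOf_le (hA n) (Ioo_subset_Icc_self hx))
    have hvx := one_sub_sq_mul_div_sq_le hx
      (sq_le_of_tendsto_fluxOf hmem hA (Ioo_subset_Icc_self hx) (hF x hx))
    rw [abs_of_nonneg (mul_nonneg hp (sq_nonneg _))]
    nlinarith [mul_nonneg hp (sq_nonneg (u' n x + F x / (1 - x ^ 2)))]
  · have h := (((hlim x hx).sub_const (F x / (1 - x ^ 2))).pow 2).const_mul (1 - x ^ 2)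
    rwa [sub_self, zero_pow two_ne_zero, mul_zero] at h

end Sequence

/-- Compact embedding of `D(A)` into `V`: every `D(A)`-bounded sequence has a subsequence
converging in the `V`-norm to some element of `V`. -/
theorem DA_compactly_embeds_V (u u' Au : ℕ → ℝ → ℝ)
    (hmem : ∀ n, MemDA (u n) (u' n) (Au n))
    (hbdd : ∃ B : ℝ, ∀ n,
      (∫ x in Ioo (-1:ℝ) 1, u n x ^ 2) + (∫ x in Ioo (-1:ℝ) 1, Au n x ^ 2) ≤ B) :
    ∃ φ : ℕ → ℕ, StrictMono φ ∧ ∃ v v' : ℝ → ℝ, MemV v v' ∧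
      Tendsto (fun k =>
          (∫ x in Ioo (-1:ℝ) 1, (u (φ k) x - v x) ^ 2)
            + ∫ x in Ioo (-1:ℝ) 1, (1 - x ^ 2) * (u' (φ k) x - v' x) ^ 2)
        atTop (nhds 0) := by
  obtain ⟨B, hB⟩ := hbdd
  have hu : ∀ n, ∫ x in Ioo (-1 : ℝ) 1, u n x ^ 2 ≤ B := fun n =>
    (le_add_of_nonneg_right (setIntegral_nonneg measurableSet_Ioo fun _ _ => sq_nonneg _)).trans
      (hB n)
  have hA : ∀ n, ∫ x in Ioo (-1 : ℝ) 1, Au n x ^ 2 ≤ B := fun n =>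
    (le_add_of_nonneg_left (setIntegral_nonneg measurableSet_Ioo fun _ _ => sq_nonneg _)).trans
      (hB n)
  obtain ⟨F, hFc, φ, hφ, hF⟩ := exists_subseq_tendsto_fluxOf hmem hA
  obtain ⟨c, -, ψ, hψ, hc⟩ := tendsto_subseq_of_bounded (Metric.isBounded_Icc _ _)
    fun n => abs_le.1 ((hmem (φ n)).abs_le (hu _) (hA _) (by norm_num : (0 : ℝ) ∈ Ioo (-1) 1))
  have hF' : ∀ x ∈ Ioo (-1 : ℝ) 1, Tendsto (fun k => fluxOf (Au (φ (ψ k))) x) atTop (𝓝 (F x)) :=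
    fun x hx => (hF x (Ioo_subset_Icc_self hx)).comp hψ.tendsto_atTop
  have hmem' := fun k => hmem (φ (ψ k))
  refine ⟨φ ∘ ψ, hφ.comp hψ, _, _, memV_of_tendsto_fluxOf hmem' (fun k => hA _) hFc hF' c, ?_⟩
  simpa using (tendsto_integral_sq_sub hmem' (fun k => hu _) (fun k => hA _) hF' hc).add
    (tendsto_integral_weighted_sq_sub_deriv hmem' (fun k => hA _) hF')
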